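/- Let n = 2, let α ≥ 1, and let v₁, v₂ : [k]×[k] → ℝ_{>0} be value functions that are nondecreasing in each coordinate and α-single crossing, i.e., for each i ∈ {1,2} with j the other index, for all profiles s and all t ∈ [k] with t ≥ s_i: α·(v_i(t, s_{-i}) − v_i(s_i, s_{-i})) ≥ v_j(t, s_{-i}) − v_j(s_i, s_{-i}) (where (t, s_{-i}) denotes the profile with agent i's signal replaced by t). Then there is no α-deterministic conflict pair: for all profiles s ≺ s′, max(ρ₂(s), ρ₁(s′)) ≥ 1/α. -/

import Mathlib

/-!
If `s ≺ s'`, every step moves agent 1's signal up and agent 2's signal down, so the corner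
`c = (s.1, s'.2)` lies below `s` in the second coordinate and below `s'` in the first.
Single crossing says that raising agent 2's signal cannot raise `v₁ - α v₂`, and raising agent 1's
signal cannot raise `v₂ - α v₁`. A conflict pair gives `α v₂ < v₁` at `s` and `α v₁ < v₂` at `s'`,
hence both at `c`; as `α ≥ 1` and `v₁ c > 0`, this gives `v₂ c > v₁ c > v₂ c`.
-/

lemma mul_lt_of_div_max_lt_one_div {α a b : ℝ} (hα : 1 ≤ α) (hpos : 0 < max a b)
    (h : b / max a b < 1 / α) : α * b < a := by
  have hα0 : 0 < α := one_pos.trans_le hα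
  rw [div_lt_div_iff₀ hpos hα0, one_mul] at h
  rcases le_total a b with hab | hab
  · rw [max_eq_right hab] at h hpos
    nlinarith
  · rw [max_eq_left hab] at h
    linarith

namespace Stmt13

variable {k : ℕ}

/-- Performance ratio of agent 1. -/
noncomputable def rho1 (v1 v2 : Fin k × Fin k → ℝ) (s : Fin k × Fin k) : ℝ :=
  v1 s / max (v1 s) (v2 s)

/-- Performance ratio of agent 2. -/
noncomputable def rho2 (v1 v2 : Fin k × Fin k → ℝ) (s : Fin k × Fin k) : ℝ :=
  v2 s / max (v1 s) (v2 s)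

/-- One step of the reachability relation: `(a,s₂) → (b,s₂)` whenever `v₁(a,s₂) < v₁(b,s₂)`,
and `(s₁,c) → (s₁,d)` whenever `v₂(s₁,d) < v₂(s₁,c)`. -/
def step (v1 v2 : Fin k × Fin k → ℝ) (p q : Fin k × Fin k) : Prop :=
  (p.2 = q.2 ∧ v1 p < v1 q) ∨ (p.1 = q.1 ∧ v2 q < v2 p)

section

variable {v1 v2 : Fin k × Fin k → ℝ} {α : ℝ}

lemma fst_le_and_snd_le_of_step (hm1 : Monotone v1) (hm2 : Monotone v2)
    {p q : Fin k × Fin k} (h : step v1 v2 p q) : p.1 ≤ q.1 ∧ q.2 ≤ p.2 := by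
  rcases h with ⟨h2, hv⟩ | ⟨h1, hv⟩
  · refine ⟨le_of_not_gt fun hlt => ?_, h2.ge⟩
    exact (hm1 (⟨hlt.le, h2.ge⟩ : q ≤ p)).not_gt hv
  · refine ⟨h1.le, le_of_not_gt fun hlt => ?_⟩
    exact (hm2 (⟨h1.le, hlt.le⟩ : p ≤ q)).not_gt hv

lemma fst_le_and_snd_le_of_transGen_step (hm1 : Monotone v1) (hm2 : Monotone v2)
    {p q : Fin k × Fin k} (h : Relation.TransGen (step v1 v2) p q) :
    p.1 ≤ q.1 ∧ q.2 ≤ p.2 := by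
  induction h with
  | single h => exact fst_le_and_snd_le_of_step hm1 hm2 h
  | tail _ h ih =>
    have h' := fst_le_and_snd_le_of_step hm1 hm2 h
    exact ⟨ih.1.trans h'.1, h'.2.trans ih.2⟩

lemma mul_v2_lt_v1_of_rho2_lt (hα : 1 ≤ α) (hv1 : ∀ s, 0 < v1 s) {s : Fin k × Fin k}
    (h : rho2 v1 v2 s < 1 / α) : α * v2 s < v1 s :=
  mul_lt_of_div_max_lt_one_div hα (lt_max_of_lt_left (hv1 s)) h

lemma mul_v1_lt_v2_of_rho1_lt (hα : 1 ≤ α) (hv1 : ∀ s, 0 < v1 s) {s : Fin k × Fin k}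
    (h : rho1 v1 v2 s < 1 / α) : α * v1 s < v2 s := by
  rw [rho1, max_comm] at h
  exact mul_lt_of_div_max_lt_one_div hα (lt_max_of_lt_right (hv1 s)) h

lemma mul_v2_lt_v1_of_snd_le
    (hsc2 : ∀ (s : Fin k × Fin k) (t : Fin k), s.2 ≤ t →
      v1 (s.1, t) - v1 s ≤ α * (v2 (s.1, t) - v2 s))
    {s : Fin k × Fin k} {t : Fin k} (hst : s.2 ≤ t) (h : α * v2 (s.1, t) < v1 (s.1, t)) :
    α * v2 s < v1 s := by
  linarith [hsc2 s t hst]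

lemma mul_v1_lt_v2_of_fst_le
    (hsc1 : ∀ (s : Fin k × Fin k) (t : Fin k), s.1 ≤ t →
      v2 (t, s.2) - v2 s ≤ α * (v1 (t, s.2) - v1 s))
    {s : Fin k × Fin k} {t : Fin k} (hst : s.1 ≤ t) (h : α * v1 (t, s.2) < v2 (t, s.2)) :
    α * v1 s < v2 s := by
  linarith [hsc1 s t hst]

end

theorem stmt13 (k : ℕ) (α : ℝ) (hα : 1 ≤ α)
    (v1 v2 : Fin k × Fin k → ℝ)
    (hv1 : ∀ s, 0 < v1 s)
    (hm1 : Monotone v1) (hm2 : Monotone v2)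
    (hsc1 : ∀ (s : Fin k × Fin k) (t : Fin k), s.1 ≤ t →
      v2 (t, s.2) - v2 s ≤ α * (v1 (t, s.2) - v1 s))
    (hsc2 : ∀ (s : Fin k × Fin k) (t : Fin k), s.2 ≤ t →
      v1 (s.1, t) - v1 s ≤ α * (v2 (s.1, t) - v2 s)) :
    ∀ s s', Relation.TransGen (step v1 v2) s s' →
      1 / α ≤ max (rho2 v1 v2 s) (rho1 v1 v2 s') := by
  intro s s' hreach
  obtain ⟨hfst, hsnd⟩ := fst_le_and_snd_le_of_transGen_step hm1 hm2 hreach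
  by_contra! hconflict
  obtain ⟨hr2, hr1⟩ := max_lt_iff.mp hconflict
  have hc1 : α * v2 (s.1, s'.2) < v1 (s.1, s'.2) :=
    mul_v2_lt_v1_of_snd_le hsc2 hsnd (mul_v2_lt_v1_of_rho2_lt hα hv1 hr2)
  have hc2 : α * v1 (s.1, s'.2) < v2 (s.1, s'.2) :=
    mul_v1_lt_v2_of_fst_le hsc1 hfst (mul_v1_lt_v2_of_rho1_lt hα hv1 hr1)
  have hv1c : v1 (s.1, s'.2) ≤ α * v1 (s.1, s'.2) := le_mul_of_one_le_left (hv1 _).le hα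
  have hv2c : v2 (s.1, s'.2) ≤ α * v2 (s.1, s'.2) :=
    le_mul_of_one_le_left (by linarith [hv1 (s.1, s'.2)]) hα
  linarith

end Stmt13
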